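/- arXiv:2402.09605 — 7 statements merged into one kernel-verified Lean document; each statement's English description precedes it below -/
import Mathlib

section
/- Let r(ξ) = sign(ξ)·√((ξ²+3)/(ξ²-1)) for |ξ| > 1. Then for all ξ with |ξ| > 1, one has ω'(r(ξ)) = ω'(ξ), where ω(ξ) = ξ/(1+ξ²). That is, r maps each frequency to another frequency with the same group velocity. -/
noncomputable def ω : ℝ → ℝ := fun ξ => ξ / (1 + ξ^2)

noncomputable def r (ξ : ℝ) : ℝ := Real.sign ξ * Real.sqrt ((ξ^2 + 3) / (ξ^2 - 1))

lemma deriv_omega (x : ℝ) : deriv ω x = (1 - x^2) / (1 + x^2)^2 := by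
  have h : (1 + x^2) ≠ 0 := by positivity
  have hd : HasDerivAt ω ((1 * (1 + x^2) - x * (0 + 2 * x^1)) / (1 + x^2)^2) x := by
    exact (hasDerivAt_id x).div ((hasDerivAt_const x 1).add (hasDerivAt_pow 2 x)) h
  rw [hd.deriv]
  ring

theorem bbm_reflection_same_group_velocity :
    ∀ ξ : ℝ, 1 < |ξ| → deriv ω (r ξ) = deriv ω ξ := by
  intro ξ hξ
  have hx2 : 0 < ξ^2 - 1 := by
    have : 1 < ξ^2 := by
      have := (one_lt_sq_iff_one_lt_abs (a := ξ)).mpr hξ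
      linarith
    linarith
  have hne : ξ ≠ 0 := by
    intro h; rw [h, abs_zero] at hξ; linarith
  have hsign : Real.sign ξ ^ 2 = 1 := by
    rcases lt_trichotomy ξ 0 with h | h | h
    · rw [Real.sign_of_neg h]; ring
    · exact absurd h hne
    · rw [Real.sign_of_pos h]; ring
  have hr2 : (r ξ)^2 = (ξ^2 + 3) / (ξ^2 - 1) := by
    rw [r, mul_pow, hsign, one_mul, Real.sq_sqrt]
    exact div_nonneg (by positivity) hx2.le
  rw [deriv_omega, deriv_omega, hr2]
  have h1 : (1 : ℝ) + ξ^2 ≠ 0 := by positivity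
  field_simp
  ring
end

section
/- The reflection map r(ξ) = sign(ξ)·√((ξ²+3)/(ξ²-1)) is an involution on {ξ : |ξ| > 1}: for all ξ with |ξ| > 1 one has |r(ξ)| > 1 and r(r(ξ)) = ξ. -/
theorem bbm_reflection_involution :
    ∀ ξ : ℝ, 1 < |ξ| → 1 < |r ξ| ∧ r (r ξ) = ξ := by
  intro ξ hξ
  have h1 : (0:ℝ) < ξ^2 - 1 := by nlinarith [sq_abs ξ, abs_nonneg ξ]
  have h2 : (1:ℝ) < (ξ^2 + 3) / (ξ^2 - 1) := by
    rw [lt_div_iff₀ h1]; linarith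
  set s := Real.sqrt ((ξ^2 + 3) / (ξ^2 - 1)) with hs
  have hs1 : 1 < s := by
    rw [hs]
    exact (Real.lt_sqrt (by norm_num)).mpr (by linarith)
  have hs0 : 0 < s := lt_trans one_pos hs1
  have hssq : s^2 = (ξ^2 + 3) / (ξ^2 - 1) := Real.sq_sqrt (le_of_lt (lt_trans one_pos h2))
  have hcases : 0 < ξ ∨ ξ < 0 := by
    rcases lt_trichotomy ξ 0 with h | h | h
    · exact Or.inr h
    · exfalso; rw [h] at hξ; simp at hξ; linarith
    · exact Or.inl h
  have hrξ : r ξ = Real.sign ξ * s := rfl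
  have key : ∀ x : ℝ, r x = Real.sign x * Real.sqrt ((x^2 + 3) / (x^2 - 1)) := fun _ => rfl
  rcases hcases with hpos | hneg
  · have hsign : Real.sign ξ = 1 := Real.sign_of_pos hpos
    have hr : r ξ = s := by rw [hrξ, hsign, one_mul]
    have habs : 1 < |r ξ| := by rw [hr, abs_of_pos hs0]; exact hs1
    refine ⟨habs, ?_⟩
    have hsign2 : Real.sign (r ξ) = 1 := Real.sign_of_pos (by rw [hr]; exact hs0)
    rw [key (r ξ), hsign2, one_mul, hr]
    have hinner : (s^2 + 3) / (s^2 - 1) = ξ^2 := by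
      rw [hssq]
      field_simp
      ring
    rw [hinner, Real.sqrt_sq (le_of_lt hpos)]
  · have hsign : Real.sign ξ = -1 := Real.sign_of_neg hneg
    have hr : r ξ = -s := by rw [hrξ, hsign]; ring
    have habs : 1 < |r ξ| := by rw [hr, abs_neg, abs_of_pos hs0]; exact hs1
    refine ⟨habs, ?_⟩
    have hsign2 : Real.sign (r ξ) = -1 := Real.sign_of_neg (by rw [hr]; linarith)
    rw [key (r ξ), hsign2, hr]
    have hinner : ((-s)^2 + 3) / ((-s)^2 - 1) = ξ^2 := by
      rw [neg_pow, hssq]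
      field_simp
      ring
    rw [hinner, Real.sqrt_sq_eq_abs, abs_of_neg hneg]
    ring
end

section
/- For c ∈ (-1/8, 0), the equation ω'(ξ) = c, with ω(ξ) = ξ/(1+ξ²), has exactly four real solutions: if ξ* > 1 is one solution, the full solution set is {ξ*, -ξ*, r(ξ*), -r(ξ*)} = {ξ*, -ξ*, r(ξ*), r(-ξ*)}, where r(ξ) = sign(ξ)·√((ξ²+3)/(ξ²-1)). -/
lemma deriv_ω (ξ : ℝ) : deriv ω ξ = (1 - ξ^2) / (1 + ξ^2)^2 := by
  have h : (1 : ℝ) + ξ^2 ≠ 0 := by positivity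
  have h1 : HasDerivAt (fun x : ℝ => x / (1 + x^2))
      ((1*(1+ξ^2) - ξ*(2*ξ))/(1+ξ^2)^2) ξ := by
    have hx : HasDerivAt (fun x : ℝ => x) 1 ξ := hasDerivAt_id ξ
    have hd : HasDerivAt (fun x : ℝ => 1 + x^2) (2*ξ) ξ := by
      simpa using (hasDerivAt_pow 2 ξ).const_add 1
    exact hx.div hd h
  rw [show ω = fun x : ℝ => x / (1+x^2) from rfl, h1.deriv]
  ring_nf

theorem bbm_group_velocity_eq_c_neg :
    ∀ c : ℝ, c ∈ Set.Ioo (-(1/8) : ℝ) 0 →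
      ∀ ξstar : ℝ, 1 < ξstar → deriv ω ξstar = c →
        r (-ξstar) = -r ξstar ∧
        (∀ ξ : ℝ, deriv ω ξ = c ↔
          ξ = ξstar ∨ ξ = -ξstar ∨ ξ = r ξstar ∨ ξ = -r ξstar) := by
  intro c hc ξstar hξ hder
  have hcneg : c < 0 := hc.2
  have hsign : Real.sign ξstar = 1 := Real.sign_of_pos (by linarith)
  have hsq : (0:ℝ) < ξstar^2 - 1 := by nlinarith
  set s : ℝ := (ξstar^2 + 3)/(ξstar^2 - 1) with hs
  have hspos : 0 < s := div_pos (by nlinarith) hsq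
  have hr : r ξstar = Real.sqrt s := by rw [r, hsign, one_mul]
  have hrneg : r (-ξstar) = - r ξstar := by
    simp [r, Real.sign_of_neg (by linarith : -ξstar < 0), hsign, neg_sq]
  refine ⟨hrneg, ?_⟩
  have hden : ((1:ℝ) + ξstar^2)^2 ≠ 0 := by positivity
  have hcval : c = (1 - ξstar^2)/(1+ξstar^2)^2 := by rw [← deriv_ω, hder]
  have factor : ∀ x : ℝ, (1 - x^2) - c*(1+x^2)^2 = -c * (x^2 - ξstar^2) * (x^2 - s) := by
    intro x
    rw [hcval, hs]
    field_simp
    ring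
  intro ξ
  rw [deriv_ω]
  have hdξ : ((1:ℝ)+ξ^2)^2 ≠ 0 := by positivity
  have hsqs : Real.sqrt s ^ 2 = s := Real.sq_sqrt hspos.le
  constructor
  · intro h
    have h2 : (1 - ξ^2) - c*(1+ξ^2)^2 = 0 := by
      field_simp at h
      linarith
    rw [factor ξ] at h2
    rcases mul_eq_zero.mp h2 with h3 | h3
    · rcases mul_eq_zero.mp h3 with h4 | h4
      · exact absurd h4 (by simpa using hcneg.ne)
      · have : (ξ - ξstar) * (ξ + ξstar) = 0 := by nlinarith
        rcases mul_eq_zero.mp this with h5 | h5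
        · exact Or.inl (by linarith)
        · exact Or.inr (Or.inl (by linarith))
    · have : (ξ - Real.sqrt s) * (ξ + Real.sqrt s) = 0 := by nlinarith
      rcases mul_eq_zero.mp this with h5 | h5
      · exact Or.inr (Or.inr (Or.inl (by rw [hr]; linarith)))
      · exact Or.inr (Or.inr (Or.inr (by rw [hr]; linarith)))
  · intro h
    have hr2 : r ξstar ^ 2 = s := by rw [hr]; exact hsqs
    have key : (1 - ξ^2) - c*(1+ξ^2)^2 = 0 := by
      rw [factor ξ]
      rcases h with h | h | h | h <;> subst h <;> simp [neg_sq, hr2]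
    field_simp
    linarith [key]
end

section
/- Every point of the line L = {(η₁,η₂,η₃;ξ) = (-η, η, η; 0) : η ∈ ℝ} is a space-time resonance for the quartic gBBM phase: the phase φ(η₁,η₂,η₃;ξ) = -ω(ξ) + ω(η₁) + ω(η₂) + ω(η₃) + ω(ξ-η₁-η₂-η₃) vanishes on L and the gradient ∇_{η₁,η₂,η₃}φ vanishes on L, where ω(ξ) = ξ/(1+ξ²). -/
noncomputable def φ (η₁ η₂ η₃ ξ : ℝ) : ℝ :=
  -ω ξ + ω η₁ + ω η₂ + ω η₃ + ω (ξ - η₁ - η₂ - η₃)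

lemma ω_neg (x : ℝ) : ω (-x) = -ω x := by
  simp only [ω, neg_sq, neg_div]

lemma ω_zero : ω 0 = 0 := by
  simp only [ω, zero_div]

lemma hasDerivAt_ω (x : ℝ) : HasDerivAt ω ((1 - x ^ 2) / (1 + x ^ 2) ^ 2) x := by
  have h := (hasDerivAt_id' x).div ((hasDerivAt_pow 2 x).const_add 1) (by positivity)
  exact h.congr_deriv (by ring)

lemma deriv_ω_neg (x : ℝ) : deriv ω (-x) = deriv ω x := by
  simp only [(hasDerivAt_ω _).deriv, neg_sq]

lemma hasDerivAt_ω_add_ω_sub (s a : ℝ) :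
    HasDerivAt (fun t => ω t + ω (s - t)) (deriv ω a - deriv ω (s - a)) a := by
  have h := (hasDerivAt_ω a).add ((hasDerivAt_ω (s - a)).comp a ((hasDerivAt_id' a).const_sub s))
  rw [(hasDerivAt_ω a).deriv, (hasDerivAt_ω (s - a)).deriv]
  exact h.congr_deriv (by ring)

lemma hasDerivAt_φ_fst (a b c ξ : ℝ) :
    HasDerivAt (fun t => φ t b c ξ) (deriv ω a - deriv ω (ξ - a - b - c)) a := by
  have e : (fun t => φ t b c ξ) =
      fun t => (-ω ξ + ω b + ω c) + (ω t + ω (ξ - b - c - t)) := by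
    funext t
    simp only [φ]
    ring_nf
  rw [e, show ξ - a - b - c = ξ - b - c - a by ring]
  exact (hasDerivAt_ω_add_ω_sub _ a).const_add _

lemma hasDerivAt_φ_snd (a b c ξ : ℝ) :
    HasDerivAt (fun t => φ a t c ξ) (deriv ω b - deriv ω (ξ - a - b - c)) b := by
  have e : (fun t => φ a t c ξ) =
      fun t => (-ω ξ + ω a + ω c) + (ω t + ω (ξ - a - c - t)) := by
    funext t
    simp only [φ]
    ring_nf
  rw [e, show ξ - a - b - c = ξ - a - c - b by ring]
  exact (hasDerivAt_ω_add_ω_sub _ b).const_add _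

lemma hasDerivAt_φ_thd (a b c ξ : ℝ) :
    HasDerivAt (fun t => φ a b t ξ) (deriv ω c - deriv ω (ξ - a - b - c)) c := by
  have e : (fun t => φ a b t ξ) =
      fun t => (-ω ξ + ω a + ω b) + (ω t + ω (ξ - a - b - t)) := by
    funext t
    simp only [φ]
    ring
  rw [e]
  exact (hasDerivAt_ω_add_ω_sub _ c).const_add _

theorem bbm_resonant_line :
    ∀ η : ℝ,
      φ (-η) η η 0 = 0 ∧
      deriv (fun t => φ t η η 0) (-η) = 0 ∧
      deriv (fun t => φ (-η) t η 0) η = 0 ∧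
      deriv (fun t => φ (-η) η t 0) η = 0 := by
  intro η
  have hsum : (0 : ℝ) - -η - η - η = -η := by ring
  refine ⟨?_, ?_, ?_, ?_⟩
  · simp only [φ, hsum, ω_neg, ω_zero]
    ring
  · rw [(hasDerivAt_φ_fst _ _ _ _).deriv, hsum, sub_self]
  · rw [(hasDerivAt_φ_snd _ _ _ _).deriv, hsum, deriv_ω_neg, sub_self]
  · rw [(hasDerivAt_φ_thd _ _ _ _).deriv, hsum, deriv_ω_neg, sub_self]
end

section
/- The function Ξ(η) = 3ω(η) + ω(r(η)) - ω(3η + r(η)) has no zeros on {η : |η| > 1}, where ω(ξ) = ξ/(1+ξ²) and r(η) = sign(η)·√((η²+3)/(η²-1)). Consequently, the space resonances (η, η, r(η); 3η + r(η)) of the quartic gBBM phase are never time resonances. -/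
lemma r_neg (x : ℝ) : r (-x) = - r x := by
  unfold r
  rw [show (-x)^2 = x^2 by ring, Real.sign_neg, neg_mul]

lemma ω_pos {x : ℝ} (hx : 0 < x) : 0 < ω x := by
  unfold ω; positivity

lemma r_pos {η : ℝ} (hη : 1 < η) : 0 < r η := by
  unfold r
  have h1 : Real.sign η = 1 := Real.sign_of_pos (by linarith)
  rw [h1, one_mul]
  apply Real.sqrt_pos.mpr
  apply div_pos <;> nlinarith

lemma Xi_pos {η : ℝ} (hη : 1 < η) : 0 < 3 * ω η + ω (r η) - ω (3 * η + r η) := by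
  have hr := r_pos hη
  set b : ℝ := 3 * η + r η with hb
  have hbη : η < b := by simp only [hb]; nlinarith
  have hmono : ω b < ω η := by
    unfold ω
    rw [div_lt_div_iff₀ (by positivity) (by positivity)]
    nlinarith [sq_nonneg (b - η), sq_nonneg (b*η)]
  have h1 := ω_pos (lt_trans one_pos hη)
  have h2 := ω_pos hr
  linarith

theorem bbm_Xi_no_zeros :
    ∀ η : ℝ, 1 < |η| →
      3 * ω η + ω (r η) - ω (3 * η + r η) ≠ 0 ∧
      φ η η (r η) (3 * η + r η) ≠ 0 := by
  intro η hη
  have key : 3 * ω η + ω (r η) - ω (3 * η + r η) ≠ 0 := by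
    rcases lt_or_ge 1 η with h | h
    · exact ne_of_gt (Xi_pos h)
    · have hneg : 1 < -η := by
        rcases abs_cases η with ⟨h1, _⟩ | ⟨h1, _⟩ <;> linarith
      have := Xi_pos hneg
      have e1 : ω η = - ω (-η) := by rw [ω_neg, neg_neg]
      have e2 : ω (r η) = - ω (r (-η)) := by
        rw [r_neg, ω_neg, neg_neg]
      have e3 : ω (3 * η + r η) = - ω (3 * (-η) + r (-η)) := by
        rw [r_neg, show 3 * (-η) + -r η = -(3 * η + r η) by ring, ω_neg, neg_neg]
      rw [e1, e2, e3]
      intro hc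
      apply ne_of_gt this
      linarith
  refine ⟨key, ?_⟩
  have : φ η η (r η) (3 * η + r η) = 3 * ω η + ω (r η) - ω (3 * η + r η) := by
    unfold φ
    rw [show 3 * η + r η - η - η - r η = η by ring]
    ring
  rw [this]
  exact key
end

section
/- The function η ↦ ω(η) - ω(r(η)) - ω(η - r(η)), where ω(ξ) = ξ/(1+ξ²) and r(η) = sign(η)·√((η²+3)/(η²-1)), has exactly two zeros on {|η| > 1}, at η = √3 and η = -√3. -/
lemma omega_zero_iff (η ρ : ℝ) (hηρ : 0 < η * ρ) :
    ω η - ω ρ - ω (η - ρ) = 0 ↔ η = ρ := by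
  have hd1 : (0:ℝ) < 1 + η^2 := by positivity
  have hd2 : (0:ℝ) < 1 + ρ^2 := by positivity
  have hd3 : (0:ℝ) < 1 + (η-ρ)^2 := by positivity
  have key : ω η - ω ρ - ω (η - ρ) =
      -(η*ρ) * (η - ρ) * (η^2 - η*ρ + ρ^2 + 3) /
      ((1+η^2) * ((1+ρ^2) * (1+(η-ρ)^2))) := by
    unfold ω
    field_simp
    ring
  rw [key, div_eq_zero_iff]
  constructor
  · rintro (h|h)
    · rcases mul_eq_zero.mp h with h|h
      · rcases mul_eq_zero.mp h with h|h
        · exfalso; linarith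
        · linarith
      · exfalso; nlinarith [sq_nonneg (η - ρ)]
    · exfalso
      have := mul_pos hd1 (mul_pos hd2 hd3)
      linarith
  · intro h; left; rw [h]; ring

theorem bbm_phase_zeros_at_sqrt3 :
    ∀ η : ℝ, 1 < |η| →
      (ω η - ω (r η) - ω (η - r η) = 0 ↔ η = Real.sqrt 3 ∨ η = -Real.sqrt 3) := by
  intro η hη
  have hη0 : η ≠ 0 := by
    intro h
    rw [h, abs_zero] at hη
    linarith
  have hsq : 1 < η^2 := by nlinarith [sq_abs η, abs_nonneg η]
  have h1 : (0:ℝ) < η^2 - 1 := by linarith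
  have hargpos : (0:ℝ) < (η^2+3)/(η^2-1) := by
    apply div_pos (by positivity) h1
  have hs0 : 0 < Real.sqrt ((η^2+3)/(η^2-1)) := Real.sqrt_pos.mpr hargpos
  have hs2 : Real.sqrt ((η^2+3)/(η^2-1)) ^ 2 = (η^2+3)/(η^2-1) :=
    Real.sq_sqrt hargpos.le
  have hr : r η = Real.sign η * Real.sqrt ((η^2+3)/(η^2-1)) := rfl
  have hρ2 : (r η)^2 = (η^2+3)/(η^2-1) := by
    rw [hr, mul_pow]
    rcases lt_or_gt_of_ne hη0 with h|h
    · rw [Real.sign_of_neg h]; rw [hs2]; ring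
    · rw [Real.sign_of_pos h]; rw [hs2]; ring
  have hηρ : 0 < η * r η := by
    rw [hr]
    rcases lt_or_gt_of_ne hη0 with h|h
    · rw [Real.sign_of_neg h]
      nlinarith
    · rw [Real.sign_of_pos h]
      nlinarith
  rw [omega_zero_iff η (r η) hηρ]
  constructor
  · intro heq
    have hh : η^2 * (η^2 - 1) = η^2 + 3 := by
      have h2 : η^2 = (η^2+3)/(η^2-1) := by rw [← heq] at hρ2; exact hρ2
      field_simp at h2
      linarith
    have hsq3 : η^2 = 3 := by
      have hfac : (η^2 - 3) * (η^2 + 1) = 0 := by linear_combination hh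
      rcases mul_eq_zero.mp hfac with h|h
      · linarith
      · nlinarith [sq_nonneg η]
    have h3 : Real.sqrt 3 ^ 2 = 3 := Real.sq_sqrt (by norm_num)
    have hfac : (η - Real.sqrt 3) * (η + Real.sqrt 3) = 0 := by
      linear_combination hsq3 - h3
    rcases mul_eq_zero.mp hfac with h|h
    · left; linarith
    · right; linarith
  · intro h
    have hsq3 : η^2 = 3 := by
      rcases h with h|h <;> rw [h]
      · exact Real.sq_sqrt (by norm_num)
      · rw [neg_pow]
        simp [Real.sq_sqrt (by norm_num : (0:ℝ) ≤ 3)]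
    have hseq : Real.sqrt ((η^2+3)/(η^2-1)) = |η| := by
      rw [hsq3]
      norm_num
      rw [show (3:ℝ) = η^2 by rw [hsq3]]
      exact Real.sqrt_sq_eq_abs η
    rw [hr, hseq]
    rcases lt_or_gt_of_ne hη0 with hc|hc
    · rw [Real.sign_of_neg hc, abs_of_neg hc]; ring
    · rw [Real.sign_of_pos hc, abs_of_pos hc]; ring
end

section
/- Near the BBM inflection point √3, the group velocity satisfies: for all ξ with 3/2 ≤ |ξ| ≤ 2, one has 2⁻⁵·(|ξ|-√3)² ≤ |ω'(ξ) + 1/8| ≤ 2⁻²·(|ξ|-√3)², where ω(ξ) = ξ/(1+ξ²). -/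
theorem bbm_group_velocity_near_inflection :
    ∀ ξ : ℝ, 3/2 ≤ |ξ| → |ξ| ≤ 2 →
      (2^5 : ℝ)⁻¹ * (|ξ| - Real.sqrt 3)^2 ≤ |deriv ω ξ + 1/8| ∧
      |deriv ω ξ + 1/8| ≤ (2^2 : ℝ)⁻¹ * (|ξ| - Real.sqrt 3)^2 := by
  intro ξ h1 h2
  have hden : (1 + ξ^2) ≠ 0 := by positivity
  have hd : HasDerivAt ω ((1*(1+ξ^2) - ξ*(2*ξ))/(1+ξ^2)^2) ξ := by
    have hu : HasDerivAt (fun x : ℝ => x) 1 ξ := hasDerivAt_id ξ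
    have hv : HasDerivAt (fun x : ℝ => 1 + x^2) (2*ξ) ξ := by
      simpa using ((hasDerivAt_pow 2 ξ).const_add 1)
    exact hu.div hv hden
  have hdv : deriv ω ξ = (1 - ξ^2)/(1+ξ^2)^2 := by
    rw [hd.deriv]; ring_nf
  have key : deriv ω ξ + 1/8 = (ξ^2-3)^2/(8*(1+ξ^2)^2) := by
    rw [hdv]; field_simp; ring
  have hnn : 0 ≤ (ξ^2-3)^2/(8*(1+ξ^2)^2) := by positivity
  rw [key, abs_of_nonneg hnn]
  set s := Real.sqrt 3 with hs
  have hs2 : s^2 = 3 := Real.sq_sqrt (by norm_num)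
  have hs1 : 1 ≤ s := by nlinarith [Real.sqrt_nonneg 3]
  have hsle : s ≤ 2 := by nlinarith [Real.sqrt_nonneg 3]
  set a := |ξ| with ha
  have ha0 : 0 ≤ a := abs_nonneg ξ
  have ha2 : ξ^2 = a^2 := (sq_abs ξ).symm
  rw [ha2]
  have hfac : (a^2-3)^2 = (a-s)^2 * (a+s)^2 := by nlinarith [hs2]
  have hlin : (1+a^2)/2 ≤ a+s := by nlinarith [mul_nonneg (sub_nonneg.2 h2) ha0]
  have hq1 : ((1+a^2)/2)^2 ≤ (a+s)^2 := by
    have h0 : (0:ℝ) ≤ (1+a^2)/2 := by positivity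
    nlinarith
  have hq2 : (a+s)^2 ≤ 2*(1+a^2)^2 := by nlinarith
  constructor
  · rw [le_div_iff₀ (by positivity), hfac]
    calc (2^5 : ℝ)⁻¹ * (a - s)^2 * (8*(1+a^2)^2)
        = (a-s)^2 * ((1+a^2)/2)^2 := by ring
      _ ≤ (a-s)^2 * (a+s)^2 := mul_le_mul_of_nonneg_left hq1 (sq_nonneg _)
  · rw [div_le_iff₀ (by positivity), hfac]
    calc (a-s)^2 * (a+s)^2
        ≤ (a-s)^2 * (2*(1+a^2)^2) := mul_le_mul_of_nonneg_left hq2 (sq_nonneg _)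
      _ = (2^2 : ℝ)⁻¹ * (a - s)^2 * (8*(1+a^2)^2) := by ring
end
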